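/- For every s ∈ S and every idempotent e ∈ E, one has (δ_s + J)·(δ_{s*} + J) = δ_e + J = (δ_{s*} + J)·(δ_s + J) in A/J; hence each coset δ_s + J is invertible in the unital algebra A/J with inverse δ_{s*} + J. -/

import Mathlib

open MonoidAlgebra

/-- An inverse semigroup: a semigroup in which every element `s` has a unique
generalized inverse `s*` with `s * s* * s = s` and `s* * s * s* = s*`. -/
class InverseSemigroup (S : Type*) extends Semigroup S where
  star : S → S
  star_left : ∀ s : S, s * star s * s = s
  star_right : ∀ s : S, star s * s * star s = star s
  star_unique : ∀ s t : S, s * t * s = s → t * s * t = t → t = star s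

variable (S : Type*) [InverseSemigroup S]

/-- The ℂ-linear span in the semigroup algebra `A = MonoidAlgebra ℂ S` of the set
`{δ_{s e t} - δ_{s t} : s, t ∈ S, e ∈ E}`, where `E = {e : e * e = e}` is the set of
idempotents of `S`. -/
noncomputable def J : Submodule ℂ (MonoidAlgebra ℂ S) :=
  Submodule.span ℂ { x | ∃ s t e : S, e * e = e ∧
    x = single (s * e * t) (1 : ℂ) - single (s * t) (1 : ℂ) }

variable {S}

theorem mul_mem_J (f : MonoidAlgebra ℂ S) {x : MonoidAlgebra ℂ S} (hx : x ∈ J S) :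
    f * x ∈ J S := by
  induction hx using Submodule.span_induction with
  | mem x hx =>
    obtain ⟨s, t, e, he, rfl⟩ := hx
    induction f using MonoidAlgebra.induction_linear with
    | zero => simp
    | add a b ha hb => rw [add_mul]; exact (J S).add_mem ha hb
    | single a b =>
      have : (single a b : MonoidAlgebra ℂ S) *
            (single (s * e * t) (1 : ℂ) - single (s * t) (1 : ℂ))
          = b • (single ((a * s) * e * t) (1 : ℂ) - single ((a * s) * t) (1 : ℂ)) := by
        rw [mul_sub, single_mul_single, single_mul_single, smul_sub, smul_single', smul_single']
        simp [mul_assoc]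
      rw [this]
      exact (J S).smul_mem _ (Submodule.subset_span ⟨a * s, t, e, he, rfl⟩)
  | zero => simp
  | add x y hx hy ihx ihy => rw [mul_add]; exact (J S).add_mem ihx ihy
  | smul c x hx ih => rw [mul_smul_comm]; exact (J S).smul_mem _ ih

theorem J_mul_mem (f : MonoidAlgebra ℂ S) {x : MonoidAlgebra ℂ S} (hx : x ∈ J S) :
    x * f ∈ J S := by
  induction hx using Submodule.span_induction with
  | mem x hx =>
    obtain ⟨s, t, e, he, rfl⟩ := hx
    induction f using MonoidAlgebra.induction_linear with
    | zero => simp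
    | add a b ha hb => rw [mul_add]; exact (J S).add_mem ha hb
    | single a b =>
      have : (single (s * e * t) (1 : ℂ) - single (s * t) (1 : ℂ)) *
            (single a b : MonoidAlgebra ℂ S)
          = b • (single (s * e * (t * a)) (1 : ℂ) - single (s * (t * a)) (1 : ℂ)) := by
        rw [sub_mul, single_mul_single, single_mul_single, smul_sub, smul_single', smul_single']
        simp [mul_assoc]
      rw [this]
      exact (J S).smul_mem _ (Submodule.subset_span ⟨s, t * a, e, he, rfl⟩)
  | zero => simp
  | add x y hx hy ihx ihy => rw [add_mul]; exact (J S).add_mem ihx ihy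
  | smul c x hx ih => rw [smul_mul_assoc]; exact (J S).smul_mem _ ih

/-- Multiplication of cosets in the quotient algebra `A ⧸ J`, well defined
since `J` is a two-sided ideal: `(f + J) * (g + J) = f * g + J`. -/
noncomputable instance : Mul (MonoidAlgebra ℂ S ⧸ J S) :=
  ⟨Quotient.map₂' (· * ·) (by
    intro a₁ a₂ h₁ b₁ b₂ h₂
    have h₁' : a₁ - a₂ ∈ J S := (Submodule.quotientRel_def (J S)).mp h₁
    have h₂' : b₁ - b₂ ∈ J S := (Submodule.quotientRel_def (J S)).mp h₂
    refine (Submodule.quotientRel_def (J S)).mpr ?_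
    have : a₁ * b₁ - a₂ * b₂ = a₁ * (b₁ - b₂) + (a₁ - a₂) * b₂ := by
      rw [mul_sub, sub_mul]; abel
    rw [this]
    exact (J S).add_mem (mul_mem_J _ h₂') (J_mul_mem _ h₁'))⟩

variable (S)

/-- The quotient map `π : A → A ⧸ J`, sending `f` to the coset `f + J`. -/
noncomputable def π : MonoidAlgebra ℂ S → MonoidAlgebra ℂ S ⧸ J S := Submodule.Quotient.mk

theorem π_mul (f g : MonoidAlgebra ℂ S) : π S (f * g) = π S f * π S g := rfl

variable {S}

/-!
Idempotents of an inverse semigroup commute, so for idempotents `f, g` the generators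
`δ_{f g f} - δ_{f f}` and `δ_{g f g} - δ_{g g}` of `J` show `δ_f ≡ δ_{f g} ≡ δ_g`
modulo `J`: all idempotents have the same coset, and `s s*`, `s* s` are idempotent.
-/

namespace InverseSemigroup

theorem star_eq_self {e : S} (he : IsIdempotentElem e) : star e = e :=
  (star_unique e e (by rw [he.eq, he.eq]) (by rw [he.eq, he.eq])).symm

theorem isIdempotentElem_mul_star (s : S) : IsIdempotentElem (s * star s) := by
  rw [IsIdempotentElem, ← mul_assoc, star_left]

theorem isIdempotentElem_star_mul (s : S) : IsIdempotentElem (star s * s) := by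
  rw [IsIdempotentElem, ← mul_assoc, star_right]

/-- With `a = (e f)*`, the element `f a e` is also an inverse of `e f`, so `a = f a e`; this
forces `a`, and hence `e f = a*`, to be idempotent. -/
theorem isIdempotentElem_mul {e f : S} (he : IsIdempotentElem e) (hf : IsIdempotentElem f) :
    IsIdempotentElem (e * f) := by
  set a := star (e * f)
  have hfae : f * a * e = a := by
    refine star_unique _ _ ?_ ?_
    · simpa only [← mul_assoc, he.mul_mul_self, hf.mul_mul_self] using star_left (e * f)
    · simpa only [← mul_assoc, he.mul_mul_self, hf.mul_mul_self] using
        congrArg (f * · * e) (star_right (e * f))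
  have ha : IsIdempotentElem a := by
    calc a * a = f * a * e * (f * a * e) := by rw [hfae]
      _ = f * (a * (e * f) * a) * e := by simp only [mul_assoc]
      _ = a := by rw [star_right, hfae]
  rw [star_unique a (e * f) (star_right _) (star_left _), star_eq_self ha]
  exact ha

theorem commute_of_isIdempotentElem {e f : S} (he : IsIdempotentElem e)
    (hf : IsIdempotentElem f) : Commute e f := by
  have hfe : f * e = star (e * f) := by
    refine star_unique _ _ ?_ ?_
    · simpa only [← mul_assoc, he.mul_mul_self, hf.mul_mul_self] using
        (isIdempotentElem_mul he hf).eq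
    · simpa only [← mul_assoc, he.mul_mul_self, hf.mul_mul_self] using
        (isIdempotentElem_mul hf he).eq
  rw [Commute, SemiconjBy, hfe, star_eq_self (isIdempotentElem_mul he hf)]

end InverseSemigroup

open InverseSemigroup

theorem single_mul_mul_sub_single_mem_J (s t : S) {e : S} (he : IsIdempotentElem e) :
    single (s * e * t) (1 : ℂ) - single (s * t) (1 : ℂ) ∈ J S :=
  Submodule.subset_span ⟨s, t, e, he, rfl⟩

theorem single_sub_single_mem_J {f g : S} (hf : IsIdempotentElem f) (hg : IsIdempotentElem g) :
    single f (1 : ℂ) - single g (1 : ℂ) ∈ J S := by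
  have hfg := commute_of_isIdempotentElem hf hg
  have hfgf : f * g * f = f * g := by rw [mul_assoc, ← hfg.eq, hf.mul_self_mul]
  have hgfg : g * f * g = g * f := by rw [mul_assoc, hfg.eq, hg.mul_self_mul]
  have hf_fg := single_mul_mul_sub_single_mem_J f f hg
  have hg_fg := single_mul_mul_sub_single_mem_J g g hf
  rw [hfgf, hf.eq] at hf_fg
  rw [hgfg, hg.eq, ← hfg.eq] at hg_fg
  simpa only [sub_sub_sub_cancel_left] using (J S).sub_mem hg_fg hf_fg

theorem π_single_eq_of_isIdempotentElem {f g : S} (hf : IsIdempotentElem f)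
    (hg : IsIdempotentElem g) : π S (single f (1 : ℂ)) = π S (single g (1 : ℂ)) :=
  (Submodule.Quotient.eq (J S)).mpr (single_sub_single_mem_J hf hg)

/-- for every `s ∈ S` and every idempotent `e ∈ E`,
`(δ_s + J) * (δ_{s*} + J) = δ_e + J = (δ_{s*} + J) * (δ_s + J)` in `A ⧸ J`; hence each
coset `δ_s + J` is invertible in the unital algebra `A ⧸ J` (whose identity is `δ_e + J`)
with inverse `δ_{s*} + J`. -/
theorem coset_single_mul_coset_single_star (s e : S) (he : e * e = e) :
    π S (single s (1 : ℂ)) * π S (single (InverseSemigroup.star s) (1 : ℂ))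
      = π S (single e (1 : ℂ)) ∧
    π S (single (InverseSemigroup.star s) (1 : ℂ)) * π S (single s (1 : ℂ))
      = π S (single e (1 : ℂ)) := by
  simp only [← π_mul, single_mul_single, one_mul]
  exact ⟨π_single_eq_of_isIdempotentElem (isIdempotentElem_mul_star s) he,
    π_single_eq_of_isIdempotentElem (isIdempotentElem_star_mul s) he⟩
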